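/- Let q be an odd prime power, let F be the finite field with q elements, and let x be an element of order 3 in PSL_2(q) := SL_2(F) / Z(SL_2(F)). Then x normalizes some nontrivial 2-subgroup of PSL_2(q). -/

import Mathlib

/-!
Lift `x` to `g ∈ SL₂(F)`. As `g` is not scalar while `g³ = ±1`, Cayley–Hamilton forces
`tr g = ±1`. Over a finite field of odd order there is then an `A ∈ SL₂(F)` with `tr A = 0` and
`tr (g A) = 1`, so that `A² = -1` and `(g A)³ = -1`: the images `x, a` in `PSL₂(q)` satisfy the
relations `x³ = a² = (x a)³ = 1` of `A₄`. In any group these relations make `a`, `x a x⁻¹` and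
`x² a x⁻²` pairwise commuting involutions, permuted cyclically by conjugation with `x`; they
generate a Klein four-group normalized by `x`.
-/

open scoped MatrixGroups

namespace Subgroup

variable {G : Type*} [Group G]

theorem pow_eq_one_of_mem_closure_of_commute {s : Set G} {n : ℕ}
    (hcomm : ∀ x ∈ s, ∀ y ∈ s, x * y = y * x) (hs : ∀ x ∈ s, x ^ n = 1) {g : G}
    (hg : g ∈ closure s) : g ^ n = 1 := by
  induction hg using closure_induction with
  | mem x hx => exact hs x hx
  | one => exact one_pow n
  | mul x y hx hy ihx ihy =>
    have hxy : Commute x y := Set.centralizer_centralizer_comm_of_comm hcomm _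
      (closure_le_centralizer_centralizer s hx) _ (closure_le_centralizer_centralizer s hy)
    rw [hxy.mul_pow, ihx, ihy, one_mul]
  | inv x _ ih => rw [inv_pow, ih, inv_one]

end Subgroup

section PresentationA4

variable {G : Type*} [Group G]

theorem commute_conj_of_pow_three {x a : G} (hx : x ^ 3 = 1) (ha : a ^ 2 = 1)
    (hxa : (x * a) ^ 3 = 1) : Commute a (x * a * x⁻¹) := by
  rw [pow_three'] at hx hxa
  have ha' : a⁻¹ = a := inv_eq_of_mul_eq_one_left (by rw [← sq, ha])
  have h₁ : a * x * a = x⁻¹ * a * x⁻¹ := calc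
    a * x * a = x⁻¹ * (x * a * (x * a) * (x * a)) * a⁻¹ * x⁻¹ := by group
    _ = x⁻¹ * a * x⁻¹ := by rw [hxa, ha']; group
  have h₂ : a * x⁻¹ * a = x * a * x := by
    simpa [mul_assoc, ha'] using congrArg (·⁻¹) h₁
  calc a * (x * a * x⁻¹) = a * x * a * x⁻¹ := by group
    _ = x⁻¹ * (x * x * x * a * (x * x * x)) * x⁻¹ * x⁻¹ := by rw [h₁, hx]; group
    _ = x * (x * a * x) := by group
    _ = x * a * x⁻¹ * a := by rw [← h₂]; group

theorem exists_isPGroup_two_mem_normalizer_of_pow_three {x a : G} (hx : x ^ 3 = 1)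
    (ha : a ^ 2 = 1) (hxa : (x * a) ^ 3 = 1) (ha1 : a ≠ 1) :
    ∃ P : Subgroup G, P ≠ ⊥ ∧ IsPGroup 2 P ∧ x ∈ Subgroup.normalizer (P : Set G) := by
  set b := x * a * x⁻¹ with hb
  set c := x * b * x⁻¹ with hc
  have hxc : x * c * x⁻¹ = a := calc
    x * c * x⁻¹ = x * x * x * a * (x * x * x)⁻¹ := by rw [hc, hb]; group
    _ = a := by rw [← pow_three', hx]; group
  have hab : Commute a b := commute_conj_of_pow_three hx ha hxa
  have hbc : Commute b c := hab.conj x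
  have hca : Commute c a := hxc ▸ hbc.conj x
  refine ⟨Subgroup.closure {a, b, c}, ?_, ?_, ?_⟩
  · exact fun h => ha1 <| Subgroup.mem_bot.mp <| h ▸ Subgroup.subset_closure (by simp)
  · refine fun g => ⟨1, Subtype.ext ?_⟩
    refine Subgroup.pow_eq_one_of_mem_closure_of_commute ?_ ?_ g.2
    · simp only [Set.mem_insert_iff, Set.mem_singleton_iff]
      rintro y (rfl | rfl | rfl) z (rfl | rfl | rfl)
      all_goals first | rfl | assumption | exact Commute.symm ‹_›
    · simp only [Set.mem_insert_iff, Set.mem_singleton_iff]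
      rintro y (rfl | rfl | rfl) <;> simp [hb, hc, conj_pow, ha]
  · apply Subgroup.normalizer_le_normalizer_closure
    rw [Subgroup.mem_normalizer_iff_conj_image_eq]
    simp only [Set.image_insert_eq, Set.image_singleton, MulAut.conj_apply, ← hb, ← hc, hxc]
    rw [Set.pair_comm, Set.insert_comm]

end PresentationA4

namespace FiniteField

variable {F : Type*} [Field F] [Fintype F]

open Polynomial in
theorem exists_sq_eq_quadratic (hF : ringChar F ≠ 2) {p q s : F} (hpq : p ≠ 0 ∨ q ≠ 0) :
    ∃ a e : F, e ^ 2 = p * a ^ 2 + q * a + s := by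
  rcases eq_or_ne p 0 with rfl | hp
  · have hq := hpq.resolve_left (not_not.mpr rfl)
    exact ⟨-s / q, 0, by field_simp; ring⟩
  · obtain ⟨e, a, h⟩ := exists_root_sum_quadratic (f := X ^ 2)
      (g := -(C p * X ^ 2 + C q * X + C s)) (degree_X_pow 2)
      (by rw [degree_neg]; exact degree_quadratic hp) (odd_card_of_char_ne_two hF)
    simp only [eval_add, eval_neg, eval_mul, eval_pow, eval_C, eval_X] at h
    exact ⟨a, e, by linear_combination h⟩

theorem exists_sq_add_mul_eq_neg_one_and_eq_one (hF : ringChar F ≠ 2) {k u r : F}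
    (hdisc : k ^ 2 + 4 * u * r = -3) (hne : k ≠ 0 ∨ u ≠ 0 ∨ r ≠ 0) :
    ∃ a b c : F, a ^ 2 + b * c = -1 ∧ k * a + r * b + u * c = 1 := by
  have h2 := Ring.two_ne_zero hF
  rcases eq_or_ne u 0 with rfl | hu
  · rcases eq_or_ne r 0 with rfl | hr
    · have hk : k ≠ 0 := by simpa using hne
      exact ⟨k⁻¹, 1, -1 - k⁻¹ ^ 2, by ring, by simp [hk]⟩
    · exact ⟨0, r⁻¹, -r, by field_simp; ring, by field_simp; ring⟩
  rcases eq_or_ne r 0 with rfl | hr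
  · exact ⟨0, -u, u⁻¹, by field_simp; ring, by field_simp; ring⟩
  -- Solving the linear equation for `c` and completing the square in `b` turns the quadric into
  -- this conic, with `e = 2 r b - 1 + k a`.
  obtain ⟨a, e, hae⟩ : ∃ a e : F, e ^ 2 = -3 * a ^ 2 - 2 * k * a - 2 - k ^ 2 := by
    have hpq : (-3 : F) ≠ 0 ∨ -(2 * k) ≠ 0 := by
      by_contra! h
      have hk : k = 0 := by simpa [h2] using h.2
      exact mul_ne_zero (mul_ne_zero (mul_ne_zero h2 h2) hu) hr
        (by linear_combination hdisc + h.1 - k * hk)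
    obtain ⟨a, e, h⟩ := exists_sq_eq_quadratic hF hpq (s := -2 - k ^ 2)
    exact ⟨a, e, by linear_combination h⟩
  refine ⟨a, (e + 1 - k * a) / (2 * r), (1 - k * a - (e + 1 - k * a) / 2) / u, ?_, ?_⟩
  · field_simp
    linear_combination (a ^ 2 + 1) * hdisc - hae
  · field_simp; ring

end FiniteField

namespace Matrix

theorem sq_eq_trace_smul_sub_det_smul_one {R : Type*} [CommRing R]
    (M : Matrix (Fin 2) (Fin 2) R) : M ^ 2 = M.trace • M - M.det • 1 := by
  ext i j
  fin_cases i <;> fin_cases j <;> simp [sq, mul_apply, trace_fin_two, det_fin_two] <;> ring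

theorem exists_det_eq_one_trace_eq_zero_trace_mul_eq_one {F : Type*} [Field F] [Fintype F]
    (hF : ringChar F ≠ 2) {M : Matrix (Fin 2) (Fin 2) F} (hdet : M.det = 1)
    (hM : ∀ r, M ≠ scalar (Fin 2) r) (htr : M.trace ^ 2 = 1) :
    ∃ A : Matrix (Fin 2) (Fin 2) F, A.det = 1 ∧ A.trace = 0 ∧ (M * A).trace = 1 := by
  rw [det_fin_two] at hdet
  have hne : M 0 0 - M 1 1 ≠ 0 ∨ M 0 1 ≠ 0 ∨ M 1 0 ≠ 0 := by
    by_contra! h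
    refine hM (M 0 0) ?_
    ext i j
    fin_cases i <;> fin_cases j <;> simp [h.2.1, h.2.2, sub_eq_zero.mp h.1]
  obtain ⟨a, b, c, habc, hlin⟩ := FiniteField.exists_sq_add_mul_eq_neg_one_and_eq_one hF
    (k := M 0 0 - M 1 1) (u := M 0 1) (r := M 1 0)
    (by rw [trace_fin_two] at htr; linear_combination htr - 4 * hdet) hne
  refine ⟨!![a, b; c, -a], by rw [det_fin_two_of]; linear_combination -habc,
    by simp [trace_fin_two], ?_⟩
  simp [trace_fin_two, mul_apply]
  linear_combination hlin

namespace SpecialLinearGroup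

section CommRing

variable {R : Type*} [CommRing R]

theorem coe_sq_eq_trace_smul_sub_one (g : SL(2, R)) :
    (g : Matrix (Fin 2) (Fin 2) R) ^ 2 =
      trace (g : Matrix (Fin 2) (Fin 2) R) • (g : Matrix (Fin 2) (Fin 2) R) - 1 := by
  rw [sq_eq_trace_smul_sub_det_smul_one, g.det_coe, one_smul]

theorem sq_eq_neg_one_of_trace_eq_zero {g : SL(2, R)}
    (h : trace (g : Matrix (Fin 2) (Fin 2) R) = 0) : g ^ 2 = -1 :=
  Subtype.ext <| by
    rw [coe_pow, coe_sq_eq_trace_smul_sub_one, h, zero_smul, zero_sub, coe_neg, coe_one]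

theorem pow_three_eq_neg_one_of_trace_eq_one {g : SL(2, R)}
    (h : trace (g : Matrix (Fin 2) (Fin 2) R) = 1) : g ^ 3 = -1 :=
  Subtype.ext <| by
    rw [coe_pow, pow_succ, coe_sq_eq_trace_smul_sub_one, h, one_smul, sub_mul, ← sq,
      coe_sq_eq_trace_smul_sub_one, h, one_smul, one_mul, coe_neg, coe_one]
    abel

variable {n : Type*} [Fintype n] [DecidableEq n]

theorem mem_center_of_coe_eq_scalar {g : SpecialLinearGroup n R} {r : R}
    (h : (g : Matrix n n R) = scalar n r) : g ∈ Subgroup.center (SpecialLinearGroup n R) :=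
  Subgroup.mem_center_iff.mpr fun A => Subtype.ext <| by
    simpa only [coe_mul, h] using (scalar_commute r (Commute.all r) (A : Matrix n n R)).eq.symm

theorem pow_card_eq_one_of_mem_center {g : SpecialLinearGroup n R}
    (hg : g ∈ Subgroup.center (SpecialLinearGroup n R)) : g ^ Fintype.card n = 1 := by
  obtain ⟨r, hr, hrg⟩ := mem_center_iff.mp hg
  exact Subtype.ext <| by rw [coe_pow, ← hrg, ← map_pow, hr, map_one, coe_one]

end CommRing

variable {F : Type*} [Field F]

theorem trace_sq_eq_one_of_pow_three_mem_center {g : SL(2, F)}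
    (hg : g ∉ Subgroup.center SL(2, F)) (h3 : g ^ 3 ∈ Subgroup.center SL(2, F)) :
    trace (g : Matrix (Fin 2) (Fin 2) F) ^ 2 = 1 := by
  set t := trace (g : Matrix (Fin 2) (Fin 2) F)
  obtain ⟨ρ, -, hρ⟩ := mem_center_iff.mp h3
  by_contra ht
  have hcube : ((g ^ 3 : SL(2, F)) : Matrix (Fin 2) (Fin 2) F) =
      (t ^ 2 - 1) • (g : Matrix (Fin 2) (Fin 2) F) - t • 1 := by
    rw [coe_pow, pow_succ, coe_sq_eq_trace_smul_sub_one, sub_mul, smul_mul_assoc, ← sq,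
      coe_sq_eq_trace_smul_sub_one, one_mul]
    module
  refine hg (mem_center_of_coe_eq_scalar (r := (t ^ 2 - 1)⁻¹ * (ρ + t)) ?_)
  rw [← hρ] at hcube
  simp only [scalar_apply, ← smul_one_eq_diagonal] at hcube ⊢
  rw [mul_smul, add_smul, hcube, sub_add_cancel, smul_smul, inv_mul_cancel₀ (sub_ne_zero.mpr ht),
    one_smul]

theorem exists_sq_eq_one_ne_one_mul_pow_three_eq_one [Fintype F] (hF : ringChar F ≠ 2)
    {x : SL(2, F) ⧸ Subgroup.center SL(2, F)} (hx3 : x ^ 3 = 1) (hx1 : x ≠ 1) :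
    ∃ a, a ^ 2 = 1 ∧ a ≠ 1 ∧ (x * a) ^ 3 = 1 := by
  obtain ⟨g, rfl⟩ := QuotientGroup.mk_surjective x
  have hg : g ∉ Subgroup.center SL(2, F) := fun h => hx1 ((QuotientGroup.eq_one_iff g).mpr h)
  have hg3 : g ^ 3 ∈ Subgroup.center SL(2, F) := (QuotientGroup.eq_one_iff _).mp hx3
  obtain ⟨A, hdet, hA, hgA⟩ := exists_det_eq_one_trace_eq_zero_trace_mul_eq_one hF g.det_coe
    (fun r h => hg (mem_center_of_coe_eq_scalar h)) (trace_sq_eq_one_of_pow_three_mem_center hg hg3)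
  set A : SL(2, F) := ⟨A, hdet⟩
  have hneg : (-1 : SL(2, F)) ∈ Subgroup.center SL(2, F) :=
    mem_center_of_coe_eq_scalar (r := -1) (by rw [map_neg, map_one, coe_neg, coe_one])
  refine ⟨(A : SL(2, F) ⧸ Subgroup.center SL(2, F)), ?_, ?_, ?_⟩
  · rw [← QuotientGroup.mk_pow, sq_eq_neg_one_of_trace_eq_zero hA]
    exact (QuotientGroup.eq_one_iff _).mpr hneg
  · intro h
    have hA2 := pow_card_eq_one_of_mem_center ((QuotientGroup.eq_one_iff A).mp h)
    rw [Fintype.card_fin, sq_eq_neg_one_of_trace_eq_zero hA] at hA2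
    exact Ring.neg_one_ne_one_of_char_ne_two hF
      (by simpa using congrArg (fun g : SL(2, F) => (g : Matrix (Fin 2) (Fin 2) F) 0 0) hA2)
  · rw [← QuotientGroup.mk_mul, ← QuotientGroup.mk_pow,
      pow_three_eq_neg_one_of_trace_eq_one hgA]
    exact (QuotientGroup.eq_one_iff _).mpr hneg

end SpecialLinearGroup

end Matrix

theorem PSL2_odd_orderThree_normalizes_two_subgroup_general
    {F : Type*} [Field F] [Fintype F] (q : ℕ)
    (hq : Odd q) (hcard : Fintype.card F = q)
    (x : Matrix.SpecialLinearGroup (Fin 2) F ⧸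
        Subgroup.center (Matrix.SpecialLinearGroup (Fin 2) F))
    (hx : orderOf x = 3) :
    ∃ P : Subgroup (Matrix.SpecialLinearGroup (Fin 2) F ⧸
        Subgroup.center (Matrix.SpecialLinearGroup (Fin 2) F)),
      P ≠ ⊥ ∧ IsPGroup 2 P ∧ x ∈ Subgroup.normalizer (P : Set (Matrix.SpecialLinearGroup (Fin 2) F ⧸
          Subgroup.center (Matrix.SpecialLinearGroup (Fin 2) F))) := by
  have hF : ringChar F ≠ 2 := by
    rw [Ne, FiniteField.even_card_iff_char_two, hcard, ← Nat.even_iff, Nat.not_even_iff_odd]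
    exact hq
  have hx3 : x ^ 3 = 1 := hx ▸ pow_orderOf_eq_one x
  obtain ⟨a, ha, ha1, hxa⟩ :=
    Matrix.SpecialLinearGroup.exists_sq_eq_one_ne_one_mul_pow_three_eq_one hF hx3
      (by rintro rfl; simp at hx)
  exact exists_isPGroup_two_mem_normalizer_of_pow_three hx3 ha hxa ha1

/-- Let `q` be an odd prime power, let `F` be the field with `q` elements, and let `x`
be an element of order 3 in `PSL₂(q) = SL₂(F)/Z(SL₂(F))`. Then `x` normalizes some
nontrivial 2-subgroup of `PSL₂(q)`. -/
theorem PSL2_odd_orderThree_normalizes_two_subgroup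
    {F : Type*} [Field F] [Fintype F] (q : ℕ)
    (hq : Odd q) (hq' : IsPrimePow q) (hcard : Fintype.card F = q)
    (x : Matrix.SpecialLinearGroup (Fin 2) F ⧸
        Subgroup.center (Matrix.SpecialLinearGroup (Fin 2) F))
    (hx : orderOf x = 3) :
    ∃ P : Subgroup (Matrix.SpecialLinearGroup (Fin 2) F ⧸
        Subgroup.center (Matrix.SpecialLinearGroup (Fin 2) F)),
      P ≠ ⊥ ∧ IsPGroup 2 P ∧ x ∈ Subgroup.normalizer (P : Set (Matrix.SpecialLinearGroup (Fin 2) F ⧸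
          Subgroup.center (Matrix.SpecialLinearGroup (Fin 2) F))) :=
  PSL2_odd_orderThree_normalizes_two_subgroup_general q hq hcard x hx
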